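/- Let I_Ω, II_Ω, T₁, T₂ : U → M_{2×2}(ℝ) be smooth maps on an open set U ⊆ ℝ² with I_Ω symmetric positive definite at every point, and set μ := −II_Ωᵀ·I_Ω⁻¹ and K_Ω := det μ. Write I_Ω = (E_Ω F_Ω; F_Ω G_Ω), T₁ = (a₁ b₁; c₁ d₁), T₂ = (a₂ b₂; c₂ d₂), and let e₁ = (1,0)ᵀ, e₂ = (0,1)ᵀ, and II_Ω^{(j)} be the j-th column of II_Ω. Assume I_Ω·T₁ᵀ + T₁·I_Ω = ∂_u I_Ω and I_Ω·T₂ᵀ + T₂·I_Ω = ∂_v I_Ω on U. Then the matrix equation ∂_v T₁ − ∂_u T₂ + T₁T₂ − T₂T₁ + II_Ω^{(1)}·e₂ᵀ·μ − II_Ω^{(2)}·e₁ᵀ·μ = 0 holds on U if and only if the Gauss-type scalar equation ∂_u b₂ − ∂_v b₁ + a₂b₁ + b₂d₁ − b₁d₂ − a₁b₂ = −E_Ω·K_Ω holds on U. -/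

import Mathlib

open Matrix Filter

noncomputable section

abbrev Pt : Type := ℝ × ℝ
abbrev Vec3 : Type := Fin 3 → ℝ

/-- direction vector for the `j`-th partial derivative -/
def pdir (j : Fin 2) : Pt := if j = 0 then ((1 : ℝ), (0 : ℝ)) else ((0 : ℝ), (1 : ℝ))

/-- partial derivative in coordinate direction `j` -/
def pd {E : Type*} [NormedAddCommGroup E] [NormedSpace ℝ E]
    (j : Fin 2) (f : Pt → E) (p : Pt) : E :=
  fderiv ℝ f p (pdir j)

/-- Jacobian matrix of a map into `Fin n → ℝ` -/
def Jac {n : ℕ} (f : Pt → (Fin n → ℝ)) (p : Pt) : Matrix (Fin n) (Fin 2) ℝ :=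
  Matrix.of fun i j => pd j (fun q => f q i) p

/-- entrywise partial derivative of a matrix valued map -/
def pdM {m n : ℕ} (j : Fin 2) (A : Pt → Matrix (Fin m) (Fin n) ℝ) (p : Pt) :
    Matrix (Fin m) (Fin n) ℝ :=
  Matrix.of fun i k => pd j (fun q => A q i k) p

/-- entrywise smoothness of a matrix valued map on a set -/
def SmoothMatOn {m n : ℕ} (U : Set Pt) (A : Pt → Matrix (Fin m) (Fin n) ℝ) : Prop :=
  ∀ i k, ContDiffOn ℝ (⊤ : ℕ∞) (fun p => A p i k) U

/-- `x` is a frontal on `U` -/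
def IsFrontalOn (U : Set Pt) (x : Pt → Vec3) : Prop :=
  ContDiffOn ℝ (⊤ : ℕ∞) x U ∧
  ∀ p ∈ U, ∃ V : Set Pt, V ⊆ U ∧ IsOpen V ∧ p ∈ V ∧
    ∃ ν : Pt → Vec3, ContDiffOn ℝ (⊤ : ℕ∞) ν V ∧
      ∀ q ∈ V, ν q ⬝ᵥ ν q = 1 ∧ ∀ j : Fin 2, ν q ⬝ᵥ (Jac x q)ᵀ j = 0

/-- `x` is a (wave) front on `U` -/
def IsFrontOn (U : Set Pt) (x : Pt → Vec3) : Prop :=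
  ContDiffOn ℝ (⊤ : ℕ∞) x U ∧
  ∀ p ∈ U, ∃ V : Set Pt, V ⊆ U ∧ IsOpen V ∧ p ∈ V ∧
    ∃ ν : Pt → Vec3, ContDiffOn ℝ (⊤ : ℕ∞) ν V ∧
      ∀ q ∈ V, ν q ⬝ᵥ ν q = 1 ∧ (∀ j : Fin 2, ν q ⬝ᵥ (Jac x q)ᵀ j = 0) ∧
        (Matrix.fromRows (Jac x q) (Jac ν q)).rank = 2

/-- `Ω` is a tangent moving base of `x` on `U` -/
def IsTMBOn (U : Set Pt) (x : Pt → Vec3) (Ω : Pt → Matrix (Fin 3) (Fin 2) ℝ) : Prop :=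
  SmoothMatOn U Ω ∧
  ∀ p ∈ U, LinearIndependent ℝ (fun j : Fin 2 => (Ω p)ᵀ j) ∧
    ∀ j : Fin 2, (Jac x p)ᵀ j ∈ Submodule.span ℝ (Set.range fun k : Fin 2 => (Ω p)ᵀ k)

/-- unit normal induced by a moving base -/
def nor (Ω : Pt → Matrix (Fin 3) (Fin 2) ℝ) (p : Pt) : Vec3 :=
  (Real.sqrt ((crossProduct ((Ω p)ᵀ 0) ((Ω p)ᵀ 1)) ⬝ᵥ (crossProduct ((Ω p)ᵀ 0) ((Ω p)ᵀ 1))))⁻¹ •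
    crossProduct ((Ω p)ᵀ 0) ((Ω p)ᵀ 1)

def IOm (Ω : Pt → Matrix (Fin 3) (Fin 2) ℝ) (p : Pt) : Matrix (Fin 2) (Fin 2) ℝ :=
  (Ω p)ᵀ * Ω p

def IIOm (Ω : Pt → Matrix (Fin 3) (Fin 2) ℝ) (p : Pt) : Matrix (Fin 2) (Fin 2) ℝ :=
  -((Ω p)ᵀ * Jac (nor Ω) p)

def Lam (x : Pt → Vec3) (Ω : Pt → Matrix (Fin 3) (Fin 2) ℝ) (p : Pt) :
    Matrix (Fin 2) (Fin 2) ℝ :=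
  (Jac x p)ᵀ * Ω p * (IOm Ω p)⁻¹

def lamOm (x : Pt → Vec3) (Ω : Pt → Matrix (Fin 3) (Fin 2) ℝ) (p : Pt) : ℝ :=
  (Lam x Ω p).det

def muM (Ω : Pt → Matrix (Fin 3) (Fin 2) ℝ) (p : Pt) : Matrix (Fin 2) (Fin 2) ℝ :=
  -((IIOm Ω p)ᵀ * (IOm Ω p)⁻¹)

/-- the Ω-relative curvature -/
def KOm (Ω : Pt → Matrix (Fin 3) (Fin 2) ℝ) (p : Pt) : ℝ := (muM Ω p).det

/-- the Ω-relative mean curvature -/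
def HOm (x : Pt → Vec3) (Ω : Pt → Matrix (Fin 3) (Fin 2) ℝ) (p : Pt) : ℝ :=
  -(1 / 2) * (muM Ω p * (Lam x Ω p).adjugate).trace

/-- singular set of `x` in `U` -/
def Sing (U : Set Pt) (x : Pt → Vec3) : Set Pt :=
  {p ∈ U | (Jac x p).rank < 2}

/-- first Christoffel matrix built from `E, F, G` -/
def Gam1 (E F G : Pt → ℝ) (p : Pt) : Matrix (Fin 2) (Fin 2) ℝ :=
  !![(1 / 2) * pd 0 E p, pd 0 F p - (1 / 2) * pd 1 E p;
     (1 / 2) * pd 1 E p, (1 / 2) * pd 0 G p] * (!![E p, F p; F p, G p])⁻¹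

/-- second Christoffel matrix built from `E, F, G` -/
def Gam2 (E F G : Pt → ℝ) (p : Pt) : Matrix (Fin 2) (Fin 2) ℝ :=
  !![(1 / 2) * pd 1 E p, (1 / 2) * pd 0 G p;
     pd 1 F p - (1 / 2) * pd 0 G p, (1 / 2) * pd 1 G p] * (!![E p, F p; F p, G p])⁻¹

/-- the unit normal `(-g₁, -g₂, 1)/√(1+g₁²+g₂²)` -/
def gnormal (g₁ g₂ : Pt → ℝ) (q : Pt) : Vec3 :=
  (Real.sqrt (1 + g₁ q ^ 2 + g₂ q ^ 2))⁻¹ • ![-(g₁ q), -(g₂ q), 1]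

/-- Weingarten matrix `α = -IIᵀ I⁻¹` of a frontal -/
def alphaM (x : Pt → Vec3) (Ω : Pt → Matrix (Fin 3) (Fin 2) ℝ) (p : Pt) :
    Matrix (Fin 2) (Fin 2) ℝ :=
  -((-((Jac x p)ᵀ * Jac (nor Ω) p))ᵀ * ((Jac x p)ᵀ * Jac x p)⁻¹)

/-- Gaussian curvature -/
def Kgauss (x : Pt → Vec3) (Ω : Pt → Matrix (Fin 3) (Fin 2) ℝ) (p : Pt) : ℝ :=
  (alphaM x Ω p).det

/-- mean curvature -/
def Hmean (x : Pt → Vec3) (Ω : Pt → Matrix (Fin 3) (Fin 2) ℝ) (p : Pt) : ℝ :=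
  -(1 / 2) * (alphaM x Ω p).trace


/-! ### Auxiliary lemmas for `matrix_compat_iff_gauss` -/

lemma pd_congr' (j : Fin 2) {f g : Pt → ℝ} {p : Pt} (h : f =ᶠ[nhds p] g) :
    pd j f p = pd j g p := by unfold pd; rw [h.fderiv_eq]

lemma pd_add' (j : Fin 2) {f g : Pt → ℝ} {p : Pt} (hf : DifferentiableAt ℝ f p)
    (hg : DifferentiableAt ℝ g p) :
    pd j (fun q => f q + g q) p = pd j f p + pd j g p := by
  unfold pd; rw [fderiv_fun_add hf hg]; rfl

lemma pd_mul' (j : Fin 2) {f g : Pt → ℝ} {p : Pt} (hf : DifferentiableAt ℝ f p)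
    (hg : DifferentiableAt ℝ g p) :
    pd j (fun q => f q * g q) p = pd j f p * g p + f p * pd j g p := by
  unfold pd; rw [fderiv_fun_mul hf hg]; simp; ring

lemma pd_comm' {f : Pt → ℝ} {p : Pt} (hf : ContDiffAt ℝ (⊤ : ℕ∞) f p) :
    pd 1 (fun q => pd 0 f q) p = pd 0 (fun q => pd 1 f q) p := by
  have h2 : ContDiffAt ℝ 2 f p := hf.of_le (by exact WithTop.coe_le_coe.mpr (le_top : (2 : ℕ∞) ≤ ⊤))
  have hsymm := h2.isSymmSndFDerivAt (by simp)
  have hd : DifferentiableAt ℝ (fderiv ℝ f) p := by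
    have := h2.fderiv_right (m := 1) (by norm_cast)
    exact this.differentiableAt one_ne_zero
  unfold pd
  rw [fderiv_clm_apply hd (differentiableAt_const _),
    fderiv_clm_apply hd (differentiableAt_const _)]
  simp [hsymm.eq]

lemma pd_expand' (j : Fin 2) (I S : Pt → Matrix (Fin 2) (Fin 2) ℝ) (p : Pt)
    (hI : ∀ a b, DifferentiableAt ℝ (fun q => I q a b) p)
    (hS : ∀ a b, DifferentiableAt ℝ (fun q => S q a b) p) (i k : Fin 2) :
    pd j (fun q => I q i 0 * S q k 0 + I q i 1 * S q k 1
        + (S q i 0 * I q 0 k + S q i 1 * I q 1 k)) p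
    = (pd j (fun q => I q i 0) p * S p k 0 + I p i 0 * pd j (fun q => S q k 0) p)
      + (pd j (fun q => I q i 1) p * S p k 1 + I p i 1 * pd j (fun q => S q k 1) p)
      + ((pd j (fun q => S q i 0) p * I p 0 k + S p i 0 * pd j (fun q => I q 0 k) p)
      + (pd j (fun q => S q i 1) p * I p 1 k + S p i 1 * pd j (fun q => I q 1 k) p)) := by
  rw [pd_add' j (((hI i 0).fun_mul (hS k 0)).fun_add ((hI i 1).fun_mul (hS k 1)))
      (((hS i 0).fun_mul (hI 0 k)).fun_add ((hS i 1).fun_mul (hI 1 k))),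
    pd_add' j ((hI i 0).fun_mul (hS k 0)) ((hI i 1).fun_mul (hS k 1)),
    pd_add' j ((hS i 0).fun_mul (hI 0 k)) ((hS i 1).fun_mul (hI 1 k)),
    pd_mul' j (hI i 0) (hS k 0), pd_mul' j (hI i 1) (hS k 1),
    pd_mul' j (hS i 0) (hI 0 k), pd_mul' j (hS i 1) (hI 1 k)]

lemma posdef_symm' {I : Matrix (Fin 2) (Fin 2) ℝ} (h : I.PosDef) : Iᵀ = I := by
  have := h.isHermitian
  ext i j
  simpa using congrFun (congrFun this i) j

lemma posdef_00' {I : Matrix (Fin 2) (Fin 2) ℝ} (h : I.PosDef) : 0 < I 0 0 := by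
  exact h.diag_pos

lemma step2' (I R : Matrix (Fin 2) (Fin 2) ℝ) (hpd : I.PosDef)
    (hskew : I * Rᵀ + R * I = 0) : R = 0 ↔ R 0 1 = 0 := by
  constructor
  · intro h; rw [h]; rfl
  · intro h01
    have hdet : I.det ≠ 0 := ne_of_gt hpd.det_pos
    have hsymm : Iᵀ = I := posdef_symm' hpd
    set S := R * I with hS
    have hST : Sᵀ = -S := by
      have : I * Rᵀ = -(R * I) := by linear_combination (norm := noncomm_ring) hskew
      calc Sᵀ = Iᵀ * Rᵀ := by rw [hS, Matrix.transpose_mul]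
      _ = I * Rᵀ := by rw [hsymm]
      _ = -S := by rw [this, hS]
    have hRS : R = S * I⁻¹ := by
      rw [hS, Matrix.mul_assoc, Matrix.mul_nonsing_inv _ (isUnit_iff_ne_zero.mpr hdet),
        Matrix.mul_one]
    have hIinv : I⁻¹ = I.det⁻¹ • I.adjugate := by
      rw [Matrix.inv_def, Ring.inverse_eq_inv']
    have hS00 : S 0 0 = 0 := by
      have := congrFun (congrFun hST 0) 0
      simp at this; linarith
    have hS11 : S 1 1 = 0 := by
      have := congrFun (congrFun hST 1) 1
      simp at this; linarith
    have hS10 : S 1 0 = - S 0 1 := by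
      have := congrFun (congrFun hST 0) 1
      simp at this; linarith
    have hadj : I.adjugate = !![I 1 1, -(I 0 1); -(I 1 0), I 0 0] := by
      rw [← Matrix.etaExpand_eq I, Matrix.etaExpand_eq]
      exact Matrix.adjugate_fin_two _
    have hR01 : R 0 1 = S 0 1 * (I.det⁻¹ * I 0 0) := by
      rw [hRS, hIinv, hadj]
      simp [Matrix.mul_apply, Fin.sum_univ_two, hS00]
    have hS01 : S 0 1 = 0 := by
      rcases mul_eq_zero.mp (hR01 ▸ h01 : S 0 1 * (I.det⁻¹ * I 0 0) = 0) with h | h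
      · exact h
      · exfalso
        have := posdef_00' hpd
        rcases mul_eq_zero.mp h with h' | h'
        · exact hdet (inv_eq_zero.mp h')
        · linarith
    have hSz : S = 0 := by
      ext i j
      fin_cases i <;> fin_cases j <;> simp [hS00, hS01, hS10, hS11]
    rw [hRS, hSz, Matrix.zero_mul]

lemma stepM' (I B : Matrix (Fin 2) (Fin 2) ℝ) (hsymm : Iᵀ = I) (hdet : I.det ≠ 0) :
    I * (vecMulVec (Bᵀ 0) ![(0:ℝ),1] * (-(Bᵀ * I⁻¹)) - vecMulVec (Bᵀ 1) ![1,0] * (-(Bᵀ * I⁻¹)))ᵀ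
    + (vecMulVec (Bᵀ 0) ![(0:ℝ),1] * (-(Bᵀ * I⁻¹)) - vecMulVec (Bᵀ 1) ![1,0] * (-(Bᵀ * I⁻¹))) * I
    = 0 := by
  set A : Matrix (Fin 2) (Fin 2) ℝ := vecMulVec (Bᵀ 0) ![(0:ℝ),1] - vecMulVec (Bᵀ 1) ![1,0]
    with hA
  set M : Matrix (Fin 2) (Fin 2) ℝ :=
    vecMulVec (Bᵀ 0) ![(0:ℝ),1] * (-(Bᵀ * I⁻¹)) - vecMulVec (Bᵀ 1) ![1,0] * (-(Bᵀ * I⁻¹))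
    with hM
  have hM' : M = -((A * Bᵀ) * I⁻¹) := by
    rw [hM, hA]; noncomm_ring
  have hMI : M * I = -(A * Bᵀ) := by
    rw [hM', Matrix.neg_mul, Matrix.mul_assoc,
      Matrix.nonsing_inv_mul _ (isUnit_iff_ne_zero.mpr hdet), Matrix.mul_one]
  have hanti : (A * Bᵀ)ᵀ = -(A * Bᵀ) := by
    ext i k
    fin_cases i <;> fin_cases k <;>
      simp [hA, Matrix.mul_apply, Fin.sum_univ_two, vecMulVec_apply] <;> ring
  have hIMT : I * Mᵀ = (M * I)ᵀ := by
    rw [Matrix.transpose_mul, hsymm]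
  rw [hIMT, hMI, Matrix.transpose_neg, hanti]
  simp

lemma step3' (I B : Matrix (Fin 2) (Fin 2) ℝ) (hdet : I.det ≠ 0) :
    (vecMulVec (Bᵀ 0) ![(0:ℝ),1] * (-(Bᵀ * I⁻¹)) - vecMulVec (Bᵀ 1) ![1,0] * (-(Bᵀ * I⁻¹))) 0 1
    = -(I 0 0) * (-(Bᵀ * I⁻¹)).det := by
  have hIinv : I⁻¹ = I.det⁻¹ • I.adjugate := by
    rw [Matrix.inv_def, Ring.inverse_eq_inv']
  have hadj : I.adjugate = !![I 1 1, -(I 0 1); -(I 1 0), I 0 0] := by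
    rw [← Matrix.etaExpand_eq I, Matrix.etaExpand_eq]
    exact Matrix.adjugate_fin_two _
  have hd : I 0 0 * I 1 1 - I 0 1 * I 1 0 ≠ 0 := by
    rwa [Matrix.det_fin_two] at hdet
  rw [hIinv, hadj]
  simp [Matrix.det_fin_two, Matrix.mul_apply, Fin.sum_univ_two, vecMulVec_apply,
    Matrix.smul_apply]
  field_simp
  ring

lemma stepC' (U : Set Pt) (hU : IsOpen U) (IOmg T₁ T₂ : Pt → Matrix (Fin 2) (Fin 2) ℝ)
    (hIs : SmoothMatOn U IOmg) (hT1 : SmoothMatOn U T₁) (hT2 : SmoothMatOn U T₂)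
    (hrel1 : ∀ p ∈ U, IOmg p * (T₁ p)ᵀ + T₁ p * IOmg p = pdM 0 IOmg p)
    (hrel2 : ∀ p ∈ U, IOmg p * (T₂ p)ᵀ + T₂ p * IOmg p = pdM 1 IOmg p)
    (p : Pt) (hp : p ∈ U) :
    IOmg p * (pdM 1 T₁ p - pdM 0 T₂ p + (T₁ p * T₂ p - T₂ p * T₁ p))ᵀ
      + (pdM 1 T₁ p - pdM 0 T₂ p + (T₁ p * T₂ p - T₂ p * T₁ p)) * IOmg p = 0 := by
  have hUp : U ∈ nhds p := hU.mem_nhds hp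
  have cI : ∀ a b, ContDiffAt ℝ (⊤ : ℕ∞) (fun q => IOmg q a b) p :=
    fun a b => (hIs a b).contDiffAt hUp
  have dI : ∀ a b, DifferentiableAt ℝ (fun q => IOmg q a b) p :=
    fun a b => (cI a b).differentiableAt (by simp)
  have dT1 : ∀ a b, DifferentiableAt ℝ (fun q => T₁ q a b) p :=
    fun a b => ((hT1 a b).contDiffAt hUp).differentiableAt (by simp)
  have dT2 : ∀ a b, DifferentiableAt ℝ (fun q => T₂ q a b) p :=
    fun a b => ((hT2 a b).contDiffAt hUp).differentiableAt (by simp)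
  have entry1 : ∀ q ∈ U, ∀ i k : Fin 2,
      IOmg q i 0 * T₁ q k 0 + IOmg q i 1 * T₁ q k 1
        + (T₁ q i 0 * IOmg q 0 k + T₁ q i 1 * IOmg q 1 k)
      = pd 0 (fun r => IOmg r i k) q := by
    intro q hq i k
    have h := congrFun (congrFun (hrel1 q hq) i) k
    simpa [Matrix.mul_apply, Matrix.add_apply, Matrix.transpose_apply,
      Fin.sum_univ_two, pdM, Matrix.of_apply] using h
  have entry2 : ∀ q ∈ U, ∀ i k : Fin 2,
      IOmg q i 0 * T₂ q k 0 + IOmg q i 1 * T₂ q k 1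
        + (T₂ q i 0 * IOmg q 0 k + T₂ q i 1 * IOmg q 1 k)
      = pd 1 (fun r => IOmg r i k) q := by
    intro q hq i k
    have h := congrFun (congrFun (hrel2 q hq) i) k
    simpa [Matrix.mul_apply, Matrix.add_apply, Matrix.transpose_apply,
      Fin.sum_univ_two, pdM, Matrix.of_apply] using h
  have H1 : ∀ i k : Fin 2,
      (pd 1 (fun q => IOmg q i 0) p * T₁ p k 0 + IOmg p i 0 * pd 1 (fun q => T₁ q k 0) p)
      + (pd 1 (fun q => IOmg q i 1) p * T₁ p k 1 + IOmg p i 1 * pd 1 (fun q => T₁ q k 1) p)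
      + ((pd 1 (fun q => T₁ q i 0) p * IOmg p 0 k + T₁ p i 0 * pd 1 (fun q => IOmg q 0 k) p)
      + (pd 1 (fun q => T₁ q i 1) p * IOmg p 1 k + T₁ p i 1 * pd 1 (fun q => IOmg q 1 k) p))
      = pd 1 (fun q => pd 0 (fun r => IOmg r i k) q) p := by
    intro i k
    rw [← pd_expand' 1 IOmg T₁ p dI dT1 i k]
    exact pd_congr' 1 (eventually_of_mem hUp (fun q hq => entry1 q hq i k))
  have H2 : ∀ i k : Fin 2,
      (pd 0 (fun q => IOmg q i 0) p * T₂ p k 0 + IOmg p i 0 * pd 0 (fun q => T₂ q k 0) p)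
      + (pd 0 (fun q => IOmg q i 1) p * T₂ p k 1 + IOmg p i 1 * pd 0 (fun q => T₂ q k 1) p)
      + ((pd 0 (fun q => T₂ q i 0) p * IOmg p 0 k + T₂ p i 0 * pd 0 (fun q => IOmg q 0 k) p)
      + (pd 0 (fun q => T₂ q i 1) p * IOmg p 1 k + T₂ p i 1 * pd 0 (fun q => IOmg q 1 k) p))
      = pd 0 (fun q => pd 1 (fun r => IOmg r i k) q) p := by
    intro i k
    rw [← pd_expand' 0 IOmg T₂ p dI dT2 i k]
    exact pd_congr' 0 (eventually_of_mem hUp (fun q hq => entry2 q hq i k))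
  have e0 : ∀ a b : Fin 2, pd 0 (fun q => IOmg q a b) p
      = IOmg p a 0 * T₁ p b 0 + IOmg p a 1 * T₁ p b 1
        + (T₁ p a 0 * IOmg p 0 b + T₁ p a 1 * IOmg p 1 b) :=
    fun a b => (entry1 p hp a b).symm
  have e1 : ∀ a b : Fin 2, pd 1 (fun q => IOmg q a b) p
      = IOmg p a 0 * T₂ p b 0 + IOmg p a 1 * T₂ p b 1
        + (T₂ p a 0 * IOmg p 0 b + T₂ p a 1 * IOmg p 1 b) :=
    fun a b => (entry2 p hp a b).symm
  ext i k
  have Hik := (H1 i k).trans ((pd_comm' (cI i k)).trans (H2 i k).symm)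
  simp only [e0, e1] at Hik
  simp only [Matrix.add_apply, Matrix.mul_apply, Matrix.sub_apply, Matrix.transpose_apply,
    Fin.sum_univ_two, pdM, Matrix.of_apply, Matrix.zero_apply]
  linear_combination Hik

/-- under the metric compatibility relations, the matrix compatibility
equation is equivalent to the Gauss-type scalar equation. -/
theorem matrix_compat_iff_gauss
    (U : Set Pt) (hU : IsOpen U)
    (IOmg IIOmg T₁ T₂ : Pt → Matrix (Fin 2) (Fin 2) ℝ)
    (hIs : SmoothMatOn U IOmg) (hIIs : SmoothMatOn U IIOmg)
    (hT1 : SmoothMatOn U T₁) (hT2 : SmoothMatOn U T₂)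
    (hposdef : ∀ p ∈ U, (IOmg p).PosDef)
    (hrel1 : ∀ p ∈ U, IOmg p * (T₁ p)ᵀ + T₁ p * IOmg p = pdM 0 IOmg p)
    (hrel2 : ∀ p ∈ U, IOmg p * (T₂ p)ᵀ + T₂ p * IOmg p = pdM 1 IOmg p) :
    (∀ p ∈ U,
      pdM 1 T₁ p - pdM 0 T₂ p + T₁ p * T₂ p - T₂ p * T₁ p
        + vecMulVec ((IIOmg p)ᵀ 0) ![0, 1] * (-((IIOmg p)ᵀ * (IOmg p)⁻¹))
        - vecMulVec ((IIOmg p)ᵀ 1) ![1, 0] * (-((IIOmg p)ᵀ * (IOmg p)⁻¹)) = 0)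
    ↔ (∀ p ∈ U,
      pd 0 (fun q => T₂ q 0 1) p - pd 1 (fun q => T₁ q 0 1) p
        + T₂ p 0 0 * T₁ p 0 1 + T₂ p 0 1 * T₁ p 1 1
        - T₁ p 0 1 * T₂ p 1 1 - T₁ p 0 0 * T₂ p 0 1
      = -(IOmg p 0 0) * (-((IIOmg p)ᵀ * (IOmg p)⁻¹)).det) := by
  have main : ∀ p ∈ U,
      ((pdM 1 T₁ p - pdM 0 T₂ p + T₁ p * T₂ p - T₂ p * T₁ p
        + vecMulVec ((IIOmg p)ᵀ 0) ![0, 1] * (-((IIOmg p)ᵀ * (IOmg p)⁻¹))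
        - vecMulVec ((IIOmg p)ᵀ 1) ![1, 0] * (-((IIOmg p)ᵀ * (IOmg p)⁻¹)) = 0)
      ↔ (pd 0 (fun q => T₂ q 0 1) p - pd 1 (fun q => T₁ q 0 1) p
        + T₂ p 0 0 * T₁ p 0 1 + T₂ p 0 1 * T₁ p 1 1
        - T₁ p 0 1 * T₂ p 1 1 - T₁ p 0 0 * T₂ p 0 1
      = -(IOmg p 0 0) * (-((IIOmg p)ᵀ * (IOmg p)⁻¹)).det)) := by
    intro p hp
    have hpd := hposdef p hp
    have hdet : (IOmg p).det ≠ 0 := ne_of_gt hpd.det_pos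
    have hsymm : (IOmg p)ᵀ = IOmg p := posdef_symm' hpd
    set C : Matrix (Fin 2) (Fin 2) ℝ :=
      pdM 1 T₁ p - pdM 0 T₂ p + (T₁ p * T₂ p - T₂ p * T₁ p) with hC
    set M : Matrix (Fin 2) (Fin 2) ℝ :=
      vecMulVec ((IIOmg p)ᵀ 0) ![0, 1] * (-((IIOmg p)ᵀ * (IOmg p)⁻¹))
        - vecMulVec ((IIOmg p)ᵀ 1) ![1, 0] * (-((IIOmg p)ᵀ * (IOmg p)⁻¹)) with hMdef
    have hsplit : pdM 1 T₁ p - pdM 0 T₂ p + T₁ p * T₂ p - T₂ p * T₁ p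
        + vecMulVec ((IIOmg p)ᵀ 0) ![0, 1] * (-((IIOmg p)ᵀ * (IOmg p)⁻¹))
        - vecMulVec ((IIOmg p)ᵀ 1) ![1, 0] * (-((IIOmg p)ᵀ * (IOmg p)⁻¹)) = C + M := by
      rw [hC, hMdef]; abel
    have h1 := stepC' U hU IOmg T₁ T₂ hIs hT1 hT2 hrel1 hrel2 p hp
    have h2 := stepM' (IOmg p) (IIOmg p) hsymm hdet
    have hskew : IOmg p * (C + M)ᵀ + (C + M) * IOmg p = 0 := by
      rw [Matrix.transpose_add, Matrix.mul_add, Matrix.add_mul]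
      calc IOmg p * Cᵀ + IOmg p * Mᵀ + (C * IOmg p + M * IOmg p)
          = (IOmg p * Cᵀ + C * IOmg p) + (IOmg p * Mᵀ + M * IOmg p) := by abel
        _ = 0 := by
            have h1' : IOmg p * Cᵀ + C * IOmg p = 0 := h1
            have h2' : IOmg p * Mᵀ + M * IOmg p = 0 := h2
            rw [h1', h2', add_zero]
    have hiff := step2' (IOmg p) (C + M) hpd hskew
    have hM01 : M 0 1 = -(IOmg p 0 0) * (-((IIOmg p)ᵀ * (IOmg p)⁻¹)).det := by
      rw [hMdef]; exact step3' (IOmg p) (IIOmg p) hdet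
    have hC01 : C 0 1 = pd 1 (fun q => T₁ q 0 1) p - pd 0 (fun q => T₂ q 0 1) p
        + (T₁ p 0 0 * T₂ p 0 1 + T₁ p 0 1 * T₂ p 1 1)
        - (T₂ p 0 0 * T₁ p 0 1 + T₂ p 0 1 * T₁ p 1 1) := by
      rw [hC]
      simp [Matrix.add_apply, Matrix.sub_apply, Matrix.mul_apply, Fin.sum_univ_two,
        pdM, Matrix.of_apply]
      ring
    rw [hsplit, hiff]
    have hadd : (C + M) 0 1 = C 0 1 + M 0 1 := rfl
    rw [hadd, hC01, hM01]
    constructor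
    · intro h; linarith
    · intro h; linarith
  exact ⟨fun h p hp => (main p hp).mp (h p hp), fun h p hp => (main p hp).mpr (h p hp)⟩
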